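/- arXiv:2106.04973 — 7 statements merged into one kernel-verified Lean document; each statement's English description precedes it below -/
import Mathlib

section
/- Let F be a cone with apex p and opening angle less than π/3. Let u and v be two points in F such that |up| ≤ r_u and |vp| ≤ r_v (where r_u, r_v > 0 are radii associated with u and v). If the orthogonal projection of v onto the angle bisector of F is strictly closer to p than the projection of u, then |uv| < |up|, and hence |uv| ≤ r_u. -/
/-!
Put `a = u - p`, `c = v - p`, and let `θa`, `θc` be the angles of `a`, `c` with the bisector `b`,
both below `π/6`. Since `|uv|² = |up|² - ‖c‖ (2‖a‖ cos ∠(a, c) - ‖c‖)`, it suffices that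
`‖c‖ < 2‖a‖ cos ∠(a, c)`. The projection hypothesis gives `‖c‖ cos θc < ‖a‖ cos θa`, the triangle
inequality for angles gives `∠(a, c) ≤ θa + θc`, and
`2 cos θc cos (θa + θc) = cos θa + cos (θa + 2θc) ≥ cos θa` because `θa + 2θc < π/2`.
-/

open Real InnerProductGeometry

lemma Real.cos_le_two_mul_cos_mul_cos_add {x y : ℝ} (h₀ : -(π / 2) ≤ x + 2 * y)
    (h₁ : x + 2 * y ≤ π / 2) : cos x ≤ 2 * cos y * cos (x + y) := by
  have hsum : cos (x + 2 * y) + cos x = 2 * cos y * cos (x + y) := by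
    rw [cos_add_cos, mul_right_comm]
    ring_nf
  linarith [cos_nonneg_of_mem_Icc ⟨h₀, h₁⟩]

section InnerProductSpace

variable {V : Type*} [NormedAddCommGroup V] [InnerProductSpace ℝ V]

lemma norm_sub_lt_norm_of_norm_lt_two_mul_cos_angle {a c : V} (hc : c ≠ 0)
    (h : ‖c‖ < 2 * ‖a‖ * cos (angle a c)) : ‖a - c‖ < ‖a‖ := by
  have hc' : 0 < ‖c‖ := norm_pos_iff.mpr hc
  have hsq : ‖a - c‖ ^ 2 = ‖a‖ ^ 2 - ‖c‖ * (2 * ‖a‖ * cos (angle a c) - ‖c‖) := by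
    rw [norm_sub_sq_real, ← cos_angle_mul_norm_mul_norm]
    ring
  have hpos : 0 < ‖c‖ * (2 * ‖a‖ * cos (angle a c) - ‖c‖) := mul_pos hc' (by linarith)
  exact lt_of_pow_lt_pow_left₀ 2 (norm_nonneg a) (by linarith)

lemma norm_sub_lt_norm_of_inner_lt_of_angle_lt {a b c : V} (ha : angle a b < π / 6)
    (hc : angle c b < π / 6) (hproj : inner ℝ c b < inner ℝ a b) : ‖a - c‖ < ‖a‖ := by
  have hc0 : c ≠ 0 := by
    rintro rfl
    rw [angle_zero_left] at hc
    linarith [pi_pos]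
  have hb : 0 < ‖b‖ := norm_pos_iff.mpr <| by
    rintro rfl
    simp at hproj
  have hcos_c : 0 < cos (angle c b) :=
    cos_pos_of_mem_Ioo ⟨by linarith [angle_nonneg c b, pi_pos], by linarith [pi_pos]⟩
  have hproj' : ‖c‖ * cos (angle c b) < ‖a‖ * cos (angle a b) := by
    rw [← cos_angle_mul_norm_mul_norm, ← cos_angle_mul_norm_mul_norm] at hproj
    nlinarith
  have hcos_ac : cos (angle a b + angle c b) ≤ cos (angle a c) := by
    rw [angle_comm c b]
    refine cos_le_cos_of_nonneg_of_le_pi (angle_nonneg a c) ?_ (angle_le_angle_add_angle a b c)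
    linarith [angle_comm b c, pi_pos]
  have htrig : cos (angle a b) ≤ 2 * cos (angle c b) * cos (angle a b + angle c b) :=
    cos_le_two_mul_cos_mul_cos_add (by linarith [angle_nonneg a b, angle_nonneg c b, pi_pos])
      (by linarith)
  refine norm_sub_lt_norm_of_norm_lt_two_mul_cos_angle hc0 (lt_of_mul_lt_mul_right ?_ hcos_c.le)
  calc ‖c‖ * cos (angle c b) < ‖a‖ * cos (angle a b) := hproj'
    _ ≤ ‖a‖ * (2 * cos (angle c b) * cos (angle a c)) := by
        gcongr
        exact htrig.trans (by gcongr)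
    _ = 2 * ‖a‖ * cos (angle a c) * cos (angle c b) := by ring

end InnerProductSpace

theorem stmt_0_general (p u v b : EuclideanSpace ℝ (Fin 2))
    (α : ℝ) (hα' : α < π / 3)
    (ru : ℝ)
    (hu : InnerProductGeometry.angle (u - p) b ≤ α / 2)
    (hv : InnerProductGeometry.angle (v - p) b ≤ α / 2)
    (heu : dist u p ≤ ru)
    (hproj : (inner ℝ (v - p) b : ℝ) < (inner ℝ (u - p) b : ℝ)) :
    dist u v < dist u p ∧ dist u v ≤ ru := by
  have hlt : ‖(u - p) - (v - p)‖ < ‖u - p‖ :=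
    norm_sub_lt_norm_of_inner_lt_of_angle_lt (by linarith) (by linarith) hproj
  rw [sub_sub_sub_cancel_right, ← dist_eq_norm, ← dist_eq_norm] at hlt
  exact ⟨hlt, hlt.le.trans heu⟩

theorem stmt_0 (p u v b : EuclideanSpace ℝ (Fin 2)) (hb : ‖b‖ = 1)
    (α : ℝ) (hα : 0 < α) (hα' : α < π / 3)
    (ru rv : ℝ) (hru : 0 < ru) (hrv : 0 < rv)
    (hu : InnerProductGeometry.angle (u - p) b ≤ α / 2)
    (hv : InnerProductGeometry.angle (v - p) b ≤ α / 2)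
    (heu : dist u p ≤ ru) (hev : dist v p ≤ rv)
    (hproj : (inner ℝ (v - p) b : ℝ) < (inner ℝ (u - p) b : ℝ)) :
    dist u v < dist u p ∧ dist u v ≤ ru :=
  stmt_0_general p u v b α hα' ru hu hv heu hproj
end

section
/- For any point p in a plane point set P with associated radii, and a cone F_p with apex p and opening angle 2π/k with k > 6, among all points q in F_p ∩ P with |qp| ≤ r_q, the point v minimizing d_F(p,·) satisfies: for every other such point u, there is an edge from u to v in the transmission graph (i.e., |uv| ≤ r_u) with |uv| < |up|. -/
/-!
Write `x = u - p`, `y = v - p`, `s = ⟪x, b⟫`, `t = ⟪y, b⟫` and `τ = tan (π / k)`. Lying in the cone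
means that the components of `x` and `y` orthogonal to `b` have norms at most `τ s` and `τ t`, and
`3 τ² < 1` because `π / k < π / 6`. Since `v` minimises the projection, `0 < t ≤ s`; Cauchy–Schwarz
on the orthogonal components gives `⟪x, y⟫ ≥ s t (1 - τ²)`, while `‖y‖² ≤ t² (1 + τ²) ≤ s t (1 + τ²)`.
Hence `‖y‖² < 2 ⟪x, y⟫`, i.e. `|uv| < |up|`, and `|up| ≤ r_u` gives the edge.
-/

open Real InnerProductGeometry
open scoped RealInnerProductSpace

section InnerProductSpace

variable {V : Type*} [NormedAddCommGroup V] [InnerProductSpace ℝ V]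

theorem real_inner_eq_add_inner_sub_smul {b : V} (hb : ‖b‖ = 1) (x y : V) :
    ⟪x, y⟫ = ⟪x, b⟫ * ⟪y, b⟫ + ⟪x - ⟪x, b⟫ • b, y - ⟪y, b⟫ • b⟫ := by
  have hbb : ⟪b, b⟫ = 1 := by rw [real_inner_self_eq_norm_sq, hb, one_pow]
  simp only [inner_sub_left, inner_sub_right, real_inner_smul_left, real_inner_smul_right, hbb,
    real_inner_comm b]
  ring

theorem norm_sq_eq_add_norm_sub_smul_sq {b : V} (hb : ‖b‖ = 1) (x : V) :
    ‖x‖ ^ 2 = ⟪x, b⟫ ^ 2 + ‖x - ⟪x, b⟫ • b‖ ^ 2 := by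
  rw [← real_inner_self_eq_norm_sq, ← real_inner_self_eq_norm_sq,
    real_inner_eq_add_inner_sub_smul hb x x, sq]

theorem inner_pos_and_norm_sub_smul_le_tan_mul_of_angle_le {b x : V} (hb : ‖b‖ = 1) {α : ℝ}
    (hα : α < π / 2) (hx : angle x b ≤ α) :
    0 < ⟪x, b⟫ ∧ ‖x - ⟪x, b⟫ • b‖ ≤ tan α * ⟪x, b⟫ := by
  have hα₀ : 0 ≤ α := (angle_nonneg x b).trans hx
  have hx₀ : x ≠ 0 := by
    rintro rfl
    rw [angle_zero_left] at hx
    linarith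
  have hcos : 0 < cos α := cos_pos_of_mem_Ioo ⟨by linarith, hα⟩
  have hproj : ‖x‖ * cos α ≤ ⟪x, b⟫ := by
    rw [← cos_angle_mul_norm_mul_norm, hb, mul_one, mul_comm]
    exact mul_le_mul_of_nonneg_right
      (cos_le_cos_of_nonneg_of_le_pi (angle_nonneg x b) (by linarith) hx) (norm_nonneg x)
  have hproj₀ : 0 < ‖x‖ * cos α := mul_pos (norm_pos_iff.mpr hx₀) hcos
  refine ⟨hproj₀.trans_le hproj, ?_⟩
  have hsq : ‖x - ⟪x, b⟫ • b‖ ^ 2 ≤ (‖x‖ * sin α) ^ 2 := by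
    have := pow_le_pow_left₀ hproj₀.le hproj 2
    nlinarith [norm_sq_eq_add_norm_sub_smul_sq hb x, sin_sq_add_cos_sq α]
  have hsin : 0 ≤ ‖x‖ * sin α :=
    mul_nonneg (norm_nonneg x) (sin_nonneg_of_nonneg_of_le_pi hα₀ (by linarith))
  calc ‖x - ⟪x, b⟫ • b‖ ≤ ‖x‖ * sin α :=
        (pow_le_pow_iff_left₀ (norm_nonneg _) hsin two_ne_zero).mp hsq
    _ = tan α * (‖x‖ * cos α) := by rw [tan_eq_sin_div_cos]; field_simp
    _ ≤ tan α * ⟪x, b⟫ :=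
        mul_le_mul_of_nonneg_left hproj (tan_nonneg_of_nonneg_of_le_pi_div_two hα₀ hα.le)

theorem norm_sub_lt_norm_of_inner_le_of_norm_sub_smul_le {b x y : V} (hb : ‖b‖ = 1) {τ : ℝ}
    (hτ : 3 * τ ^ 2 < 1) (hy : 0 < ⟪y, b⟫) (hyx : ⟪y, b⟫ ≤ ⟪x, b⟫)
    (hx' : ‖x - ⟪x, b⟫ • b‖ ≤ τ * ⟪x, b⟫) (hy' : ‖y - ⟪y, b⟫ • b‖ ≤ τ * ⟪y, b⟫) :
    ‖x - y‖ < ‖x‖ := by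
  set s := ⟪x, b⟫
  set t := ⟪y, b⟫
  have hst : 0 < s * t := mul_pos (hy.trans_le hyx) hy
  have hτ₀ : 0 ≤ τ := nonneg_of_mul_nonneg_left ((norm_nonneg _).trans hy') hy
  have hcross : -(τ ^ 2 * (s * t)) ≤ ⟪x - s • b, y - t • b⟫ := by
    have hprod := mul_le_mul hx' hy' (norm_nonneg _) (mul_nonneg hτ₀ (hy.le.trans hyx))
    linarith [neg_le_of_abs_le (abs_real_inner_le_norm (x - s • b) (y - t • b))]
  have hy'sq := pow_le_pow_left₀ (norm_nonneg _) hy' 2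
  have hy_sq : ‖y‖ ^ 2 < 2 * ⟪x, y⟫ := by
    rw [norm_sq_eq_add_norm_sub_smul_sq hb y, real_inner_eq_add_inner_sub_smul hb x y]
    nlinarith [mul_le_mul_of_nonneg_left hyx hy.le]
  refine lt_of_pow_lt_pow_left₀ 2 (norm_nonneg x) ?_
  rw [norm_sub_sq_real]
  linarith

end InnerProductSpace

theorem three_mul_tan_sq_lt_one {α : ℝ} (h₀ : 0 ≤ α) (h : α < π / 6) : 3 * tan α ^ 2 < 1 := by
  have hlt : tan α < 1 / √3 :=
    tan_pi_div_six ▸ tan_lt_tan_of_nonneg_of_lt_pi_div_two h₀ (by linarith [pi_pos]) h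
  have hsq :=
    pow_lt_pow_left₀ hlt (tan_nonneg_of_nonneg_of_le_pi_div_two h₀ (by linarith)) two_ne_zero
  rw [div_pow, sq_sqrt zero_le_three] at hsq
  linarith

theorem stmt_1_general (P : Finset (EuclideanSpace ℝ (Fin 2))) (r : EuclideanSpace ℝ (Fin 2) → ℝ)
    (p b : EuclideanSpace ℝ (Fin 2)) (hb : ‖b‖ = 1)
    (k : ℕ) (hk : 6 < k)
    (v : EuclideanSpace ℝ (Fin 2))
    (hvC : InnerProductGeometry.angle (v - p) b ≤ π / (k : ℝ))
    (hmin : ∀ q ∈ P, InnerProductGeometry.angle (q - p) b ≤ π / (k : ℝ) → dist q p ≤ r q →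
      (inner ℝ (v - p) b : ℝ) ≤ (inner ℝ (q - p) b : ℝ)) :
    ∀ u ∈ P, InnerProductGeometry.angle (u - p) b ≤ π / (k : ℝ) → dist u p ≤ r u → u ≠ v →
      dist u v ≤ r u ∧ dist u v < dist u p := by
  intro u hu huC huE _
  have hα : π / k < π / 6 :=
    div_lt_div_of_pos_left pi_pos (by norm_num) (by exact_mod_cast hk)
  have hα₀ : 0 ≤ π / k := by positivity
  obtain ⟨-, hu'⟩ := inner_pos_and_norm_sub_smul_le_tan_mul_of_angle_le hb (by linarith) huC
  obtain ⟨hv, hv'⟩ := inner_pos_and_norm_sub_smul_le_tan_mul_of_angle_le hb (by linarith) hvC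
  have hlt : dist u v < dist u p := by
    rw [dist_eq_norm, dist_eq_norm, ← sub_sub_sub_cancel_right u v p]
    exact norm_sub_lt_norm_of_inner_le_of_norm_sub_smul_le hb (three_mul_tan_sq_lt_one hα₀ hα)
      hv (hmin u hu huC huE) hu' hv'
  exact ⟨hlt.le.trans huE, hlt⟩

theorem stmt_1 (P : Finset (EuclideanSpace ℝ (Fin 2))) (r : EuclideanSpace ℝ (Fin 2) → ℝ)
    (hr : ∀ q ∈ P, 0 < r q)
    (p b : EuclideanSpace ℝ (Fin 2)) (hp : p ∈ P) (hb : ‖b‖ = 1)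
    (k : ℕ) (hk : 6 < k)
    (v : EuclideanSpace ℝ (Fin 2)) (hvP : v ∈ P)
    (hvC : InnerProductGeometry.angle (v - p) b ≤ π / (k : ℝ))
    (hvE : dist v p ≤ r v)
    (hmin : ∀ q ∈ P, InnerProductGeometry.angle (q - p) b ≤ π / (k : ℝ) → dist q p ≤ r q →
      (inner ℝ (v - p) b : ℝ) ≤ (inner ℝ (q - p) b : ℝ)) :
    ∀ u ∈ P, InnerProductGeometry.angle (u - p) b ≤ π / (k : ℝ) → dist u p ≤ r u → u ≠ v →
      dist u v ≤ r u ∧ dist u v < dist u p :=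
  stmt_1_general P r p b hb k hk v hvC hmin
end

section
/- Let k > 8 be an integer and t = tan(π/4 + 2π/k). Let p be a point, F a cone with apex p of opening angle 2π/k, and u, v points in F with v lying on the segment-side such that s, the orthogonal projection of v onto line up, lies on segment up, and the angle ∠upv ≤ 2π/k. Then |vp| + t·|uv| ≤ t·|up|. -/
/-!
Drop the perpendicular from `v` to `s` on the segment `up`. The right triangle `vsp` has its angle
at `p` equal to `φ = ∠upv`, so `|sp| = |vp| cos φ` and `|vs| = |vp| sin φ`, while `|uv| ≤ |us| + |sv|`
and `|us| + |sp| = |up|`. Hence the claim reduces to the scalar inequality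
`1 + t sin φ ≤ t cos φ`, which holds for `φ ≤ α := 2π/k < π/4` because
`tan (π/4 + α) (cos α - sin α) = cos α + sin α ≥ 1`.
-/

open Real EuclideanGeometry

theorem tan_pi_div_four_add_mul_cos_sub_sin {α : ℝ} (hα : cos (π / 4 + α) ≠ 0) :
    tan (π / 4 + α) * (cos α - sin α) = cos α + sin α := by
  have hcos : cos α - sin α = √2 * cos (π / 4 + α) := by
    rw [cos_add, cos_pi_div_four, sin_pi_div_four]
    linear_combination -(cos α - sin α) * Real.sq_sqrt (zero_le_two : (0 : ℝ) ≤ 2) / 2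
  have hsin : cos α + sin α = √2 * sin (π / 4 + α) := by
    rw [sin_add, cos_pi_div_four, sin_pi_div_four]
    linear_combination -(cos α + sin α) * Real.sq_sqrt (zero_le_two : (0 : ℝ) ≤ 2) / 2
  rw [hcos, hsin, tan_eq_sin_div_cos, mul_left_comm, div_mul_cancel₀ _ hα]

theorem one_le_cos_add_sin {α : ℝ} (h₀ : 0 ≤ α) (h₁ : α ≤ π / 2) : 1 ≤ cos α + sin α := by
  have hcos : cos α ^ 2 ≤ cos α :=
    pow_le_of_le_one (cos_nonneg_of_mem_Icc ⟨by linarith, h₁⟩) (cos_le_one α) two_ne_zero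
  have hsin : sin α ^ 2 ≤ sin α :=
    pow_le_of_le_one (sin_nonneg_of_nonneg_of_le_pi h₀ (by linarith)) (sin_le_one α) two_ne_zero
  linarith [cos_sq_add_sin_sq α]

theorem one_add_tan_mul_sin_le_tan_mul_cos {φ α : ℝ} (hφ₀ : 0 ≤ φ) (hφα : φ ≤ α)
    (hα : α < π / 4) : 1 + tan (π / 4 + α) * sin φ ≤ tan (π / 4 + α) * cos φ := by
  have ht : 0 ≤ tan (π / 4 + α) :=
    (tan_pos_of_pos_of_lt_pi_div_two (by linarith) (by linarith)).le
  have hcos : cos α ≤ cos φ := cos_le_cos_of_nonneg_of_le_pi hφ₀ (by linarith) hφα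
  have hsin : sin φ ≤ sin α := sin_le_sin_of_le_of_le_pi_div_two (by linarith) (by linarith) hφα
  have hkey := tan_pi_div_four_add_mul_cos_sub_sin
    (cos_pos_of_mem_Ioo (x := π / 4 + α) ⟨by linarith, by linarith⟩).ne'
  have : 1 ≤ tan (π / 4 + α) * (cos φ - sin φ) :=
    calc 1 ≤ cos α + sin α := one_le_cos_add_sin (by linarith) (by linarith)
      _ = tan (π / 4 + α) * (cos α - sin α) := hkey.symm
      _ ≤ tan (π / 4 + α) * (cos φ - sin φ) := by gcongr
  linarith

section

variable {E : Type*} [NormedAddCommGroup E] [InnerProductSpace ℝ E] {u v p s : E}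

theorem inner_sub_right_eq_zero_of_mem_segment {x : E} (hs : s ∈ segment ℝ u p)
    (h : inner ℝ x (p - u) = 0) : inner ℝ x (p - s) = 0 := by
  rw [segment_eq_image'] at hs
  obtain ⟨c, -, rfl⟩ := hs
  rw [show p - (u + c • (p - u)) = (1 - c) • (p - u) by module, real_inner_smul_right, h,
    mul_zero]

theorem angle_eq_angle_of_mem_segment_of_inner_eq_zero (hs : s ∈ segment ℝ u p)
    (hperp : inner ℝ (v - s) (p - u) = 0) : ∠ u p v = ∠ s p v := by
  by_cases hsp : s = p
  · -- both angles are `π / 2`: `∠ p p v` by the zero-vector convention, `∠ u p v` by `hperp`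
    subst hsp
    rw [angle_self_left, angle, ← InnerProductGeometry.inner_eq_zero_iff_angle_eq_pi_div_two,
      vsub_eq_sub, vsub_eq_sub, real_inner_comm, ← neg_sub s u, inner_neg_right, hperp, neg_zero]
  · rw [segment_symm, mem_segment_iff_wbtw] at hs
    exact (hs.angle_eq_left v hsp).symm

theorem dist_add_mul_dist_le_mul_dist {t : ℝ} (ht : 0 ≤ t) (hs : s ∈ segment ℝ u p)
    (hperp : inner ℝ (v - s) (p - u) = 0)
    (hφ : 1 + t * sin (∠ u p v) ≤ t * cos (∠ u p v)) :
    dist v p + t * dist u v ≤ t * dist u p := by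
  have hright : ∠ v s p = π / 2 := by
    rw [angle, ← InnerProductGeometry.inner_eq_zero_iff_angle_eq_pi_div_two, vsub_eq_sub,
      vsub_eq_sub]
    exact inner_sub_right_eq_zero_of_mem_segment hs hperp
  have hcos : cos (∠ u p v) * dist v p = dist s p := by
    rw [angle_eq_angle_of_mem_segment_of_inner_eq_zero hs hperp, dist_comm s p]
    exact cos_angle_mul_dist_of_angle_eq_pi_div_two hright
  have hsin : sin (∠ u p v) * dist v p = dist s v := by
    rw [angle_eq_angle_of_mem_segment_of_inner_eq_zero hs hperp, dist_comm s v]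
    exact sin_angle_mul_dist_of_angle_eq_pi_div_two hright
  have hsplit : dist u s + dist s p = dist u p := dist_add_dist_of_mem_segment hs
  calc dist v p + t * dist u v ≤ dist v p + t * (dist u s + dist s v) := by
        gcongr; exact dist_triangle u s v
    _ = dist v p * (1 + t * sin (∠ u p v)) + t * dist u s := by rw [← hsin]; ring
    _ ≤ dist v p * (t * cos (∠ u p v)) + t * dist u s := by gcongr
    _ = t * dist u p := by rw [← hsplit, ← hcos]; ring

end

theorem stmt_2_general (k : ℕ) (hk : 8 < k) (u v p s : EuclideanSpace ℝ (Fin 2))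
    (hs : s ∈ segment ℝ u p)
    (hperp : (inner ℝ (v - s) (p - u) : ℝ) = 0)
    (hang : EuclideanGeometry.angle u p v ≤ 2 * π / (k : ℝ)) :
    dist v p + Real.tan (π / 4 + 2 * π / (k : ℝ)) * dist u v ≤
      Real.tan (π / 4 + 2 * π / (k : ℝ)) * dist u p := by
  have hk' : (8 : ℝ) < k := by exact_mod_cast hk
  have hα : 2 * π / (k : ℝ) < π / 4 := by
    rw [div_lt_iff₀ (by linarith)]
    nlinarith [pi_pos]
  have hφ₀ := angle_nonneg u p v
  exact dist_add_mul_dist_le_mul_dist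
    (tan_pos_of_pos_of_lt_pi_div_two (by linarith [pi_pos]) (by linarith)).le hs hperp
    (one_add_tan_mul_sin_le_tan_mul_cos hφ₀ hang hα)

theorem stmt_2 (k : ℕ) (hk : 8 < k) (u v p s : EuclideanSpace ℝ (Fin 2))
    (hup : u ≠ p)
    (hs : s ∈ segment ℝ u p)
    (hperp : (inner ℝ (v - s) (p - u) : ℝ) = 0)
    (hang : EuclideanGeometry.angle u p v ≤ 2 * π / (k : ℝ)) :
    dist v p + Real.tan (π / 4 + 2 * π / (k : ℝ)) * dist u v ≤
      Real.tan (π / 4 + 2 * π / (k : ℝ)) * dist u p :=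
  stmt_2_general k hk u v p s hs hperp hang
end

section
/- For every integer k > 8, the Θ-graph-based subgraph H_k of the transmission graph G (containing, for each point p and each of the k cones F with apex p, the edge from the point of F_p with an edge to p minimizing d_F(p,·)) is a t-spanner of G for t = tan(π/4 + 2π/k): for every edge (u,p) of G there is a directed path from u to p in H_k of Euclidean length at most t·|up|. -/
open Real

/-- The index of the cone (among `k` cones of opening angle `2π/k`
partitioning the plane) containing the direction of `z`. -/
noncomputable def coneIdx (k : ℕ) (z : ℂ) : ℤ :=
  ⌊(Complex.arg z + π) * k / (2 * π)⌋

/-- The direction angle of the bisector of the cone with index `c`. -/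
noncomputable def bisAngle (k : ℕ) (c : ℤ) : ℝ :=
  ((c : ℝ) + 1 / 2) * (2 * π / k) - π

/-- `dF k p q`: the (signed) distance from `p` to the orthogonal projection of `q`
onto the bisector of the cone with apex `p` containing `q`. -/
noncomputable def dF (k : ℕ) (p q : ℂ) : ℝ :=
  ((q - p) * Complex.exp (-(↑(bisAngle k (coneIdx k (q - p))) * Complex.I))).re

/-- The transmission-graph edge relation: `u → v` iff `|uv| ≤ r u`. -/
def TEdge (P : Finset ℂ) (r : ℂ → ℝ) (u v : ℂ) : Prop :=
  u ∈ P ∧ v ∈ P ∧ u ≠ v ∧ dist u v ≤ r u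

/-- Edges of the Θ-graph `H_k`: for each point `p` and each cone, keep only the
incoming edge from the point of the cone minimizing `dF`. -/
def ThetaEdge (k : ℕ) (P : Finset ℂ) (r : ℂ → ℝ) (u v : ℂ) : Prop :=
  TEdge P r u v ∧ ∀ q, TEdge P r q v → coneIdx k (q - v) = coneIdx k (u - v) →
    dF k v u ≤ dF k v q

/-- The Euclidean length of a path given as a list of vertices. -/
noncomputable def pathLen : List ℂ → ℝ
  | [] => 0
  | [_] => 0
  | a :: b :: l => dist a b + pathLen (b :: l)

/-!
Let `v` be the point that `H_k` keeps in the cone of `p` containing `u`. As `d_F(p, v) ≤ d_F(p, u)`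
and `u, v` lie in a cone of opening `θ = 2π/k < π/4`, plane trigonometry gives
`|uv| + tan (π/4 - θ) |vp| ≤ |up|`. In particular `|uv| < |up|`, so `(u, v)` is an edge of `G`, and
induction over the finitely many distances between points of `P` gives a path from `u` to `v` in
`H_k` of length at most `t |uv|`. Appending the edge `(v, p)` yields length at most
`t |uv| + |vp| ≤ t |up|`, because `t · tan (π/4 - θ) = 1`.
-/

lemma tan_pi_div_four_sub_pos {θ : ℝ} (h0 : 0 < θ) (h1 : θ < π / 4) : 0 < tan (π / 4 - θ) :=
  tan_pos_of_pos_of_lt_pi_div_two (by linarith) (by linarith)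

lemma tan_pi_div_four_sub_mul_one_add_le {θ : ℝ} (h0 : 0 < θ) (h1 : θ < π / 4) :
    tan (π / 4 - θ) * (1 + θ) ≤ 1 - θ := by
  have hcos : 0 < cos θ := cos_pos_of_mem_Ioo ⟨by linarith, by linarith⟩
  have hsin : 0 < sin θ := sin_pos_of_pos_of_lt_pi h0 (by linarith)
  have hθ : θ * cos θ < sin θ := by
    have := lt_tan h0 (by linarith)
    rwa [tan_eq_sin_div_cos, lt_div_iff₀ hcos] at this
  have htan : tan (π / 4 - θ) = (cos θ - sin θ) / (cos θ + sin θ) := by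
    rw [tan_eq_sin_div_cos, sin_sub, cos_sub, sin_pi_div_four, cos_pi_div_four, ← mul_sub,
      ← mul_add, mul_div_mul_left _ _ (by positivity)]
  rw [htan, div_mul_eq_mul_div, div_le_iff₀ (by positivity)]
  nlinarith

lemma tan_pi_div_four_add_mul_tan_pi_div_four_sub {θ : ℝ} (h : tan (π / 4 - θ) ≠ 0) :
    tan (π / 4 + θ) * tan (π / 4 - θ) = 1 := by
  rw [show π / 4 + θ = π / 2 - (π / 4 - θ) by ring, tan_pi_div_two_sub, inv_mul_cancel₀ h]

/- Second-order bounds on the cosines reduce this to `(1 - c)² ≥ 5θ²/4` for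
`c = tan (π/4 - θ)`; since `c (1 + θ) ≤ 1 - θ`, that holds as long as `(1 + θ)² ≤ 16/5`,
which `θ < π/4` barely ensures. -/
lemma two_mul_tan_mul_cos_le {θ α β : ℝ} (h0 : 0 < θ) (h1 : θ < π / 4)
    (hα : |α| ≤ θ / 2) (hβ : |β| ≤ θ / 2) :
    2 * tan (π / 4 - θ) * cos β ≤ cos (α - 2 * β) + tan (π / 4 - θ) ^ 2 * cos α := by
  have hc0 : 0 < tan (π / 4 - θ) := tan_pi_div_four_sub_pos h0 h1
  have hcθ := tan_pi_div_four_sub_mul_one_add_le h0 h1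
  set c := tan (π / 4 - θ)
  have hθ : θ < 63 / 80 := by linarith [pi_lt_d2]
  have hα2 : α ^ 2 ≤ θ ^ 2 / 4 := by nlinarith [sq_abs α, abs_nonneg α]
  have hαβ2 : (α - 2 * β) ^ 2 ≤ 9 * θ ^ 2 / 4 := by
    have : |α - 2 * β| ≤ 3 * θ / 2 := by
      calc |α - 2 * β| ≤ |α| + |2 * β| := abs_sub _ _
        _ ≤ 3 * θ / 2 := by rw [abs_mul, abs_two]; linarith
    nlinarith [sq_abs (α - 2 * β), abs_nonneg (α - 2 * β)]
  have hcosα : 1 - θ ^ 2 / 8 ≤ cos α := by linarith [one_sub_sq_div_two_le_cos (x := α)]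
  have hcosαβ : 1 - 9 * θ ^ 2 / 8 ≤ cos (α - 2 * β) := by
    linarith [one_sub_sq_div_two_le_cos (x := α - 2 * β)]
  have hgap : 5 * θ ^ 2 / 4 ≤ (1 - c) ^ 2 := by
    have h2θ : 2 * θ ≤ (1 - c) * (1 + θ) := by linarith
    have h45 : (1 + θ) ^ 2 ≤ 16 / 5 := by nlinarith
    nlinarith [pow_le_pow_left₀ (by linarith) h2θ 2,
      mul_le_mul_of_nonneg_left h45 (sq_nonneg (1 - c))]
  have hc1 : c ^ 2 ≤ 1 := by nlinarith
  nlinarith [mul_le_mul_of_nonneg_left (cos_le_one β) hc0.le,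
    mul_le_mul_of_nonneg_left hcosα (sq_nonneg c), mul_le_mul_of_nonneg_right hc1 (sq_nonneg θ)]

lemma re_mul_exp_neg_mul_I (z : ℂ) (b : ℝ) :
    (z * Complex.exp (-(b * Complex.I))).re = ‖z‖ * cos (Complex.arg z - b) := by
  conv_lhs => rw [← Complex.norm_mul_exp_arg_mul_I z]
  rw [mul_assoc, ← Complex.exp_add, ← sub_eq_add_neg, ← sub_mul, ← Complex.ofReal_sub,
    Complex.re_ofReal_mul, Complex.exp_ofReal_mul_I_re]

lemma norm_sub_sq_eq_cos_arg (z w : ℂ) :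
    ‖z - w‖ ^ 2 = ‖z‖ ^ 2 + ‖w‖ ^ 2 - 2 * ‖z‖ * ‖w‖ * cos (Complex.arg z - Complex.arg w) := by
  have hconj : (starRingEnd ℂ) w = ‖w‖ * Complex.exp (-(Complex.arg w * Complex.I)) := by
    conv_lhs => rw [← Complex.norm_mul_exp_arg_mul_I w]
    rw [map_mul, Complex.conj_ofReal, ← Complex.exp_conj, map_mul, Complex.conj_ofReal,
      Complex.conj_I, mul_neg]
  have hinner : inner ℝ w z = ‖z‖ * ‖w‖ * cos (Complex.arg z - Complex.arg w) := by
    rw [Complex.inner, hconj, mul_left_comm, Complex.re_ofReal_mul, re_mul_exp_neg_mul_I]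
    ring
  rw [norm_sub_sq_real, real_inner_comm, hinner]
  ring

theorem norm_sub_add_tan_mul_norm_le {θ b : ℝ} {z w : ℂ} (h0 : 0 < θ) (h1 : θ < π / 4)
    (hz : |Complex.arg z - b| ≤ θ / 2) (hw : |Complex.arg w - b| ≤ θ / 2)
    (hproj : (w * Complex.exp (-(b * Complex.I))).re ≤ (z * Complex.exp (-(b * Complex.I))).re) :
    ‖z - w‖ + tan (π / 4 - θ) * ‖w‖ ≤ ‖z‖ := by
  rw [re_mul_exp_neg_mul_I, re_mul_exp_neg_mul_I] at hproj
  have hF := two_mul_tan_mul_cos_le h0 h1 hz hw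
  have hcθ := tan_pi_div_four_sub_mul_one_add_le h0 h1
  have hc0 : 0 < tan (π / 4 - θ) := tan_pi_div_four_sub_pos h0 h1
  set α := Complex.arg z - b
  set β := Complex.arg w - b
  set c := tan (π / 4 - θ)
  have hθ : θ < 63 / 80 := by linarith [pi_lt_d2]
  have hcosβ : 1 - θ ^ 2 / 8 ≤ cos β := by
    nlinarith [one_sub_sq_div_two_le_cos (x := β), sq_abs β, abs_nonneg β]
  have hcβ : c ≤ cos β := by nlinarith
  have hcρ : c * ‖w‖ ≤ ‖z‖ := by
    nlinarith [cos_le_one α, norm_nonneg z, norm_nonneg w]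
  have hprod : cos α + cos (α - 2 * β) = 2 * cos (α - β) * cos β := by
    rw [cos_add_cos]; ring_nf
  -- multiplying the target inequality by `cos β > 0` turns it into `hproj` plus `hF`
  have hlin : ‖w‖ * (1 - c ^ 2) ≤ 2 * ‖z‖ * (cos (α - β) - c) := by
    have hc1 : c ^ 2 ≤ 1 := by nlinarith
    refine le_of_mul_le_mul_right ?_ (hc0.trans_le hcβ)
    nlinarith [mul_le_mul_of_nonneg_right hproj (sub_nonneg.mpr hc1),
      mul_le_mul_of_nonneg_left hF (norm_nonneg z), congrArg (‖z‖ * ·) hprod]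
  have hsq : ‖z - w‖ ^ 2 ≤ (‖z‖ - c * ‖w‖) ^ 2 := by
    rw [norm_sub_sq_eq_cos_arg, show Complex.arg z - Complex.arg w = α - β by ring]
    nlinarith [mul_le_mul_of_nonneg_left hlin (norm_nonneg w)]
  have := (pow_le_pow_iff_left₀ (norm_nonneg _) (sub_nonneg.mpr hcρ) two_ne_zero).mp hsq
  linarith

open Finset

lemma pathLen_append_singleton {l : List ℂ} {v : ℂ} (hv : l.getLast? = some v) (p : ℂ) :
    pathLen (l ++ [p]) = pathLen l + dist v p := by
  induction l with
  | nil => simp at hv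
  | cons x l ih =>
    cases l with
    | nil =>
      obtain rfl : x = v := by simpa using hv
      simp [pathLen]
    | cons y l =>
      rw [List.getLast?_cons_cons] at hv
      simp only [List.cons_append, pathLen] at ih ⊢
      rw [ih hv, add_assoc]

lemma card_filter_dist_lt_lt {P : Finset ℂ} {u v : ℂ} {d : ℝ} (hu : u ∈ P) (hv : v ∈ P)
    (huv : dist u v < d) :
    #{q ∈ P ×ˢ P | dist q.1 q.2 < dist u v} < #{q ∈ P ×ˢ P | dist q.1 q.2 < d} := by
  refine card_lt_card (ssubset_iff_of_subset ?_ |>.mpr ⟨(u, v), ?_, ?_⟩)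
  · exact monotone_filter_right _ fun _ _ hq => hq.trans huv
  · simp [hu, hv, huv]
  · simp

theorem exists_chain_pathLen_le {E H : ℂ → ℂ → Prop} (P : Finset ℂ)
    (hP : ∀ u v, E u v → u ∈ P ∧ v ∈ P) (t : ℝ)
    (hstep : ∀ u p, E u p → ∃ v, H v p ∧ (v = u ∨ E u v ∧ dist u v < dist u p) ∧
      t * dist u v + dist v p ≤ t * dist u p) (u p : ℂ) (hup : E u p) :
    ∃ l : List ℂ, l.IsChain H ∧ l.head? = some u ∧ l.getLast? = some p ∧
      pathLen l ≤ t * dist u p := by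
  induction hn : #{q ∈ P ×ˢ P | dist q.1 q.2 < dist u p} using Nat.strong_induction_on
    generalizing u p with
  | _ n ih =>
  obtain ⟨v, hvp, rfl | ⟨huv, hlt⟩, hlen⟩ := hstep u p hup
  · refine ⟨[v, p], List.isChain_pair.mpr hvp, rfl, rfl, ?_⟩
    simpa [pathLen] using hlen
  · obtain ⟨hu, hv⟩ := hP u v huv
    obtain ⟨l, hchain, hhead, hlast, hl⟩ :=
      ih _ (hn ▸ card_filter_dist_lt_lt hu hv hlt) u v huv rfl
    refine ⟨l ++ [p], hchain.append (List.isChain_singleton p) ?_, ?_, by simp, ?_⟩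
    · simpa [hlast] using hvp
    · cases l with
      | nil => simp at hhead
      | cons a l => simpa using hhead
    · rw [pathLen_append_singleton hlast]
      linarith

lemma abs_arg_sub_bisAngle_le {k : ℕ} (hk : 0 < k) (z : ℂ) :
    |Complex.arg z - bisAngle k (coneIdx k z)| ≤ π / k := by
  have hk' : (0 : ℝ) < k := by exact_mod_cast hk
  have hlo := Int.floor_le ((Complex.arg z + π) * k / (2 * π))
  have hhi := Int.lt_floor_add_one ((Complex.arg z + π) * k / (2 * π))
  rw [← coneIdx, le_div_iff₀ (by positivity)] at hlo
  rw [← coneIdx, div_lt_iff₀ (by positivity)] at hhi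
  have hbis : bisAngle k (coneIdx k z) * k = (coneIdx k z + 1 / 2) * (2 * π) - π * k := by
    rw [bisAngle]; field_simp
  rw [abs_le, ← neg_div, le_div_iff₀ hk', div_le_iff₀ hk']
  constructor <;> nlinarith

lemma two_mul_pi_div_lt_pi_div_four {k : ℕ} (hk : 8 < k) : 2 * π / k < π / 4 := by
  have hk' : (8 : ℝ) < k := by exact_mod_cast hk
  rw [div_lt_iff₀ (by positivity)]
  nlinarith [pi_pos]

lemma dist_add_tan_mul_dist_le_of_dF_le {k : ℕ} (hk : 8 < k) {u v p : ℂ}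
    (hcone : coneIdx k (v - p) = coneIdx k (u - p)) (hd : dF k p v ≤ dF k p u) :
    dist u v + tan (π / 4 - 2 * π / k) * dist v p ≤ dist u p := by
  have hcone_u := abs_arg_sub_bisAngle_le (by omega : 0 < k) (u - p)
  have hcone_v := abs_arg_sub_bisAngle_le (by omega : 0 < k) (v - p)
  rw [hcone, show π / (k : ℝ) = 2 * π / k / 2 by ring] at hcone_v
  rw [show π / (k : ℝ) = 2 * π / k / 2 by ring] at hcone_u
  rw [dF, dF, hcone] at hd
  have := norm_sub_add_tan_mul_norm_le (by positivity) (two_mul_pi_div_lt_pi_div_four hk)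
    hcone_u hcone_v hd
  rwa [sub_sub_sub_cancel_right, ← dist_eq_norm, ← dist_eq_norm, ← dist_eq_norm] at this

lemma exists_thetaEdge_of_tEdge (k : ℕ) {P : Finset ℂ} {r : ℂ → ℝ} {u p : ℂ}
    (hup : TEdge P r u p) :
    ∃ v, ThetaEdge k P r v p ∧ coneIdx k (v - p) = coneIdx k (u - p) ∧ dF k p v ≤ dF k p u := by
  classical
  set S := {q ∈ P | TEdge P r q p ∧ coneIdx k (q - p) = coneIdx k (u - p)}
  have huS : u ∈ S := mem_filter.mpr ⟨hup.1, hup, rfl⟩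
  obtain ⟨v, hvS, hvmin⟩ := S.exists_min_image (dF k p) ⟨u, huS⟩
  obtain ⟨-, hvp, hcone⟩ := mem_filter.mp hvS
  refine ⟨v, ⟨hvp, fun q hqp hq => hvmin q ?_⟩, hcone, hvmin u huS⟩
  exact mem_filter.mpr ⟨hqp.1, hqp, hq.trans hcone⟩

lemma exists_thetaEdge_step {k : ℕ} (hk : 8 < k) {P : Finset ℂ} {r : ℂ → ℝ} {u p : ℂ}
    (hup : TEdge P r u p) :
    ∃ v, ThetaEdge k P r v p ∧ (v = u ∨ TEdge P r u v ∧ dist u v < dist u p) ∧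
      dist u v + tan (π / 4 - 2 * π / k) * dist v p ≤ dist u p := by
  obtain ⟨v, hvp, hcone, hd⟩ := exists_thetaEdge_of_tEdge k hup
  have hle := dist_add_tan_mul_dist_le_of_dF_le hk hcone hd
  refine ⟨v, hvp, ?_, hle⟩
  by_cases hvu : v = u
  · exact .inl hvu
  have hc := tan_pi_div_four_sub_pos (by positivity) (two_mul_pi_div_lt_pi_div_four hk)
  have hlt : dist u v < dist u p := by nlinarith [dist_pos.mpr hvp.1.2.2.1]
  exact .inr ⟨⟨hup.1, hvp.1.1, Ne.symm hvu, hlt.le.trans hup.2.2.2⟩, hlt⟩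

theorem stmt_4_general (k : ℕ) (hk : 8 < k) (P : Finset ℂ) (r : ℂ → ℝ) :
    ∀ u p : ℂ, TEdge P r u p →
      ∃ l : List ℂ, l.Chain' (ThetaEdge k P r) ∧ l.head? = some u ∧
        l.getLast? = some p ∧
        pathLen l ≤ Real.tan (π / 4 + 2 * π / (k : ℝ)) * dist u p := by
  set t := tan (π / 4 + 2 * π / k)
  have hc := tan_pi_div_four_sub_pos (by positivity) (two_mul_pi_div_lt_pi_div_four hk)
  have htc : t * tan (π / 4 - 2 * π / k) = 1 := tan_pi_div_four_add_mul_tan_pi_div_four_sub hc.ne'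
  have ht : 0 ≤ t := (pos_of_mul_pos_left (htc ▸ one_pos) hc.le).le
  refine exists_chain_pathLen_le P (fun u v h => ⟨h.1, h.2.1⟩) t fun u p hup => ?_
  obtain ⟨v, hvp, hnext, hle⟩ := exists_thetaEdge_step hk hup
  refine ⟨v, hvp, hnext, ?_⟩
  calc t * dist u v + dist v p = t * (dist u v + tan (π / 4 - 2 * π / k) * dist v p) := by
        rw [mul_add, ← mul_assoc, htc, one_mul]
    _ ≤ t * dist u p := mul_le_mul_of_nonneg_left hle ht

theorem stmt_4 (k : ℕ) (hk : 8 < k) (P : Finset ℂ) (r : ℂ → ℝ)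
    (hr : ∀ q ∈ P, 0 < r q) :
    ∀ u p : ℂ, TEdge P r u p →
      ∃ l : List ℂ, l.Chain' (ThetaEdge k P r) ∧ l.head? = some u ∧
        l.getLast? = some p ∧
        pathLen l ≤ Real.tan (π / 4 + 2 * π / (k : ℝ)) * dist u p :=
  stmt_4_general k hk P r
end

section
/- Let p be the apex of a cone F with opening angle π/3. Let x and y be points in F with |xp| ≤ r_x, |yp| ≤ r_y, and r_x ≤ r_y. Then |xy| ≤ r_y, i.e., the transmission graph contains an edge from y to x. -/
open Real

/-! Seen from the apex `p`, the two points are at most `π / 3` apart in angle (each is within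
`π / 6` of the axis), and a triangle whose angle at `p` is at most `π / 3` has its third side no
longer than the longer of the two sides at `p`. -/

namespace InnerProductGeometry

variable {V : Type*} [NormedAddCommGroup V] [InnerProductSpace ℝ V]

theorem norm_sub_le_of_angle_le_pi_div_three {u v : V} {R : ℝ}
    (huv : angle u v ≤ π / 3) (hu : ‖u‖ ≤ R) (hv : ‖v‖ ≤ R) : ‖u - v‖ ≤ R := by
  have hcos : 1 / 2 ≤ cos (angle u v) := by
    rw [← cos_pi_div_three]
    exact cos_le_cos_of_nonneg_of_le_pi (angle_nonneg u v) (by linarith [pi_pos]) huv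
  have hsq : ‖u - v‖ * ‖u - v‖ ≤ ‖u‖ * ‖u‖ + ‖v‖ * ‖v‖ - ‖u‖ * ‖v‖ := by
    rw [norm_sub_sq_eq_norm_sq_add_norm_sq_sub_two_mul_norm_mul_norm_mul_cos_angle]
    nlinarith [mul_nonneg (norm_nonneg u) (norm_nonneg v)]
  have hR : 0 ≤ R := (norm_nonneg v).trans hv
  rw [mul_self_le_mul_self_iff (norm_nonneg _) hR]
  nlinarith [norm_nonneg u, norm_nonneg v]

end InnerProductGeometry

theorem stmt_6_general (p b x y : EuclideanSpace ℝ (Fin 2))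
    (rx ry : ℝ)
    (hx : InnerProductGeometry.angle (x - p) b ≤ π / 6)
    (hy : InnerProductGeometry.angle (y - p) b ≤ π / 6)
    (hxe : dist x p ≤ rx) (hye : dist y p ≤ ry) (hr : rx ≤ ry) :
    dist x y ≤ ry := by
  have hxy : InnerProductGeometry.angle (x - p) (y - p) ≤ π / 3 := by
    linarith [InnerProductGeometry.angle_le_angle_add_angle (x - p) b (y - p),
      InnerProductGeometry.angle_comm b (y - p)]
  rw [dist_eq_norm, ← sub_sub_sub_cancel_right x y p]
  rw [dist_eq_norm] at hxe hye
  exact InnerProductGeometry.norm_sub_le_of_angle_le_pi_div_three hxy (hxe.trans hr) hye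

theorem stmt_6 (p b x y : EuclideanSpace ℝ (Fin 2)) (hb : ‖b‖ = 1)
    (rx ry : ℝ)
    (hx : InnerProductGeometry.angle (x - p) b ≤ π / 6)
    (hy : InnerProductGeometry.angle (y - p) b ≤ π / 6)
    (hxe : dist x p ≤ rx) (hye : dist y p ≤ ry) (hr : rx ≤ ry) :
    dist x y ≤ ry :=
  stmt_6_general p b x y rx ry hx hy hxe hye hr
end

section
/- Let L be a set of points all contained in a cone F with apex p of opening angle π/3, such that each q ∈ L satisfies |qp| ≤ r_q. Then the sequence of points of L sorted in ascending order of associated radii is a chain: for any two points x before y in the sorted order (so r_x ≤ r_y), the transmission graph contains the edge from y to x, i.e., |xy| ≤ r_y. -/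
open Real InnerProductGeometry

/- Any two points of the cone make an angle of at most `π / 3` at its apex (triangle inequality
for angles). By the law of cosines, the side of a triangle opposite an angle of at most `π / 3` is
no longer than the longer of the other two sides, so `|xy| ≤ max |xp| |yp| ≤ max r_x r_y = r_y`. -/

theorem norm_sub_le_max_of_angle_le_pi_div_three {V : Type*} [NormedAddCommGroup V]
    [InnerProductSpace ℝ V] {u v : V} (h : angle u v ≤ π / 3) :
    ‖u - v‖ ≤ max ‖u‖ ‖v‖ := by
  have hcos : 1 / 2 ≤ Real.cos (angle u v) := by
    rw [← cos_pi_div_three]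
    exact cos_le_cos_of_nonneg_of_le_pi (angle_nonneg u v) (by linarith [pi_pos]) h
  have hlaw := norm_sub_sq_eq_norm_sq_add_norm_sq_sub_two_mul_norm_mul_norm_mul_cos_angle u v
  have hu := norm_nonneg u
  have hv := norm_nonneg v
  refine abs_le_of_sq_le_sq' ?_ (hu.trans (le_max_left _ _)) |>.2
  rcases le_total ‖u‖ ‖v‖ with huv | hvu
  · rw [max_eq_right huv]
    nlinarith [mul_le_mul_of_nonneg_left hcos (by positivity : 0 ≤ 2 * ‖u‖ * ‖v‖)]
  · rw [max_eq_left hvu]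
    nlinarith [mul_le_mul_of_nonneg_left hcos (by positivity : 0 ≤ 2 * ‖u‖ * ‖v‖)]

theorem angle_le_of_angle_le_half {V : Type*} [NormedAddCommGroup V] [InnerProductSpace ℝ V]
    {u v b : V} {θ : ℝ} (hu : angle u b ≤ θ / 2) (hv : angle v b ≤ θ / 2) : angle u v ≤ θ :=
  calc angle u v ≤ angle u b + angle b v := angle_le_angle_add_angle u b v
    _ ≤ θ := by rw [angle_comm b v]; linarith

theorem stmt_7_general (L : Finset (EuclideanSpace ℝ (Fin 2))) (r : EuclideanSpace ℝ (Fin 2) → ℝ)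
    (p b : EuclideanSpace ℝ (Fin 2))
    (hcone : ∀ q ∈ L, InnerProductGeometry.angle (q - p) b ≤ π / 6)
    (hedge : ∀ q ∈ L, dist q p ≤ r q) :
    ∀ x ∈ L, ∀ y ∈ L, r x ≤ r y → dist x y ≤ r y := by
  intro x hx y hy hrxy
  have hangle : angle (x - p) (y - p) ≤ π / 3 :=
    angle_le_of_angle_le_half (b := b) (by linarith [hcone x hx]) (by linarith [hcone y hy])
  calc dist x y = ‖(x - p) - (y - p)‖ := by rw [sub_sub_sub_cancel_right, dist_eq_norm]
    _ ≤ max ‖x - p‖ ‖y - p‖ := norm_sub_le_max_of_angle_le_pi_div_three hangle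
    _ ≤ r y := by
      rw [← dist_eq_norm, ← dist_eq_norm]
      exact max_le ((hedge x hx).trans hrxy) (hedge y hy)

theorem stmt_7 (L : Finset (EuclideanSpace ℝ (Fin 2))) (r : EuclideanSpace ℝ (Fin 2) → ℝ)
    (hr : ∀ q ∈ L, 0 < r q)
    (p b : EuclideanSpace ℝ (Fin 2)) (hb : ‖b‖ = 1)
    (hcone : ∀ q ∈ L, InnerProductGeometry.angle (q - p) b ≤ π / 6)
    (hedge : ∀ q ∈ L, dist q p ≤ r q) :
    ∀ x ∈ L, ∀ y ∈ L, r x ≤ r y → dist x y ≤ r y :=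
  stmt_7_general L r p b hcone hedge
end

section
/- Let G be a directed graph and T a rooted binary 'separation tree' where each node w is assigned a vertex subset (separator) S_w, the subsets partition V(G), and the subtree at w induces a subgraph G_w such that every edge of G between the two child-subtrees' vertex sets has an endpoint path through S_w (formally: every path in G_w between a vertex in the left subtree's vertices and a vertex in the right subtree's vertices contains a vertex of S_w). Then for any two vertices p, q with p ∈ S_v and q ∈ S_u, and any p-to-q path π in G, there exists an ancestor node w common to v and u (on the path from their lowest common ancestor to the root) such that π is entirely contained in G_w and π intersects S_w. -/
/-!
Descend the tree along the path. At a node `(S, l, r)` either the path meets `S`, and this node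
is the answer, or the path lies in `l.verts ∪ r.verts`. In the second case no edge of `G` joins
`l.verts` to `r.verts` (such an edge would be a two-vertex path between the two sides avoiding
`S`), so the path stays on the side of its first vertex and we recurse into that child.
-/

inductive SepTree (V : Type*) : Type _
  | nil : SepTree V
  | node (S : Set V) (l r : SepTree V) : SepTree V

namespace SepTree

def verts {V : Type*} : SepTree V → Set V
  | nil => ∅
  | node S l r => S ∪ l.verts ∪ r.verts

def sep {V : Type*} : SepTree V → Set V
  | nil => ∅
  | node S _ _ => S

inductive Subtree {V : Type*} : SepTree V → SepTree V → Prop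
  | refl (t : SepTree V) : Subtree t t
  | left {t l r : SepTree V} {S : Set V} : Subtree t l → Subtree t (node S l r)
  | right {t l r : SepTree V} {S : Set V} : Subtree t r → Subtree t (node S l r)

/-- The separation-tree property: separators are disjoint from the children's
vertex sets, the children's vertex sets are disjoint, and every path in the
induced subgraph between a vertex of one child's subtree and a vertex of the
other child's subtree contains a vertex of the separator. -/
def Valid {V : Type*} (G : V → V → Prop) : SepTree V → Prop
  | nil => True
  | node S l r =>
      Disjoint S l.verts ∧ Disjoint S r.verts ∧ Disjoint l.verts r.verts ∧
      (∀ π : List V, π.Chain' G → (∀ x ∈ π, x ∈ S ∪ l.verts ∪ r.verts) →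
        (∃ a, π.head? = some a ∧ a ∈ l.verts) →
        (∃ z, π.getLast? = some z ∧ z ∈ r.verts) →
        ∃ x ∈ π, x ∈ S) ∧
      (∀ π : List V, π.Chain' G → (∀ x ∈ π, x ∈ S ∪ l.verts ∪ r.verts) →
        (∃ a, π.head? = some a ∧ a ∈ r.verts) →
        (∃ z, π.getLast? = some z ∧ z ∈ l.verts) →
        ∃ x ∈ π, x ∈ S) ∧
      Valid G l ∧ Valid G r

end SepTree

theorem List.IsChain.forall_mem_of_head_mem {α : Type*} {R : α → α → Prop} {A B : Set α}
    {l : List α} (hl : l.IsChain R) (hAB : ∀ x ∈ l, x ∈ A ∪ B) (hhead : ∀ a ∈ l.head?, a ∈ A)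
    (hR : ∀ x ∈ A, ∀ y ∈ B, ¬ R x y) : ∀ x ∈ l, x ∈ A :=
  (List.IsChain.iff_mem.mp hl).induction (· ∈ A) l
    (fun _ y ⟨_, hy, hxy⟩ hx => (hAB y hy).resolve_right fun hyB => hR _ hx y hyB hxy)
    (fun hne => hhead _ (List.head?_eq_some_head hne))

theorem not_rel_of_forall_path_meets {α : Type*} {R : α → α → Prop} {U S A B : Set α}
    (hSA : Disjoint S A) (hSB : Disjoint S B) (hAU : A ⊆ U) (hBU : B ⊆ U)
    (hsep : ∀ π : List α, π.IsChain R → (∀ x ∈ π, x ∈ U) →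
      (∃ a, π.head? = some a ∧ a ∈ A) → (∃ z, π.getLast? = some z ∧ z ∈ B) → ∃ x ∈ π, x ∈ S)
    {x y : α} (hx : x ∈ A) (hy : y ∈ B) : ¬ R x y := fun hxy => by
  obtain ⟨z, hz, hzS⟩ := hsep [x, y] (List.isChain_pair.mpr hxy)
    (by simpa using ⟨hAU hx, hBU hy⟩) ⟨x, rfl, hx⟩ ⟨y, rfl, hy⟩
  rcases List.mem_pair.mp hz with rfl | rfl
  · exact hSA.ne_of_mem hzS hx rfl
  · exact hSB.ne_of_mem hzS hy rfl

namespace SepTree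

theorem exists_subtree_meets_sep {V : Type*} {G : V → V → Prop} {T : SepTree V}
    (hT : Valid G T) {p : V} {π : List V} (hπ : π.IsChain G) (hhead : π.head? = some p)
    (hsub : ∀ x ∈ π, x ∈ T.verts) :
    ∃ t : SepTree V, Subtree t T ∧ (∀ x ∈ π, x ∈ t.verts) ∧ ∃ x ∈ π, x ∈ t.sep := by
  have hp : p ∈ π := List.mem_of_mem_head? hhead
  induction T with
  | nil => exact absurd (hsub p hp) id
  | node S l r ihl ihr =>
    obtain ⟨hSl, hSr, -, hlr, hrl, hl, hr⟩ := hT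
    by_cases hS : ∃ x ∈ π, x ∈ S
    · exact ⟨_, .refl _, hsub, hS⟩
    push Not at hS
    have hsub' : ∀ x ∈ π, x ∈ l.verts ∪ r.verts := fun x hx =>
      (hsub x hx).imp_left (·.resolve_left (hS x hx))
    rcases hsub' p hp with hpl | hpr
    · have hπl := hπ.forall_mem_of_head_mem hsub' (by simpa [hhead])
        fun x hx y hy => not_rel_of_forall_path_meets hSl hSr
          (Set.subset_union_right.trans Set.subset_union_left) Set.subset_union_right hlr hx hy
      obtain ⟨t, ht, hπt, hmeet⟩ := ihl hl hπl
      exact ⟨t, .left ht, hπt, hmeet⟩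
    · have hπr := hπ.forall_mem_of_head_mem (Set.union_comm _ _ ▸ hsub') (by simpa [hhead])
        fun x hx y hy => not_rel_of_forall_path_meets hSr hSl
          Set.subset_union_right (Set.subset_union_right.trans Set.subset_union_left) hrl hx hy
      obtain ⟨t, ht, hπt, hmeet⟩ := ihr hr hπr
      exact ⟨t, .right ht, hπt, hmeet⟩

end SepTree

theorem stmt_16_general {V : Type*} (G : V → V → Prop) (T : SepTree V)
    (hvalid : SepTree.Valid G T) (hall : T.verts = Set.univ)
    (p : V) (π : List V) (hπ : π.Chain' G)
    (hhead : π.head? = some p) :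
    ∃ t : SepTree V, SepTree.Subtree t T ∧ (∀ x ∈ π, x ∈ t.verts) ∧
      ∃ x ∈ π, x ∈ t.sep :=
  SepTree.exists_subtree_meets_sep hvalid hπ hhead fun x _ => hall ▸ Set.mem_univ x

theorem stmt_16 {V : Type*} (G : V → V → Prop) (T : SepTree V)
    (hvalid : SepTree.Valid G T) (hall : T.verts = Set.univ)
    (p q : V) (π : List V) (hπ : π.Chain' G)
    (hhead : π.head? = some p) (hlast : π.getLast? = some q) :
    ∃ t : SepTree V, SepTree.Subtree t T ∧ (∀ x ∈ π, x ∈ t.verts) ∧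
      ∃ x ∈ π, x ∈ t.sep :=
  stmt_16_general G T hvalid hall p π hπ hhead
end
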